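/- Let α be real with 0 < α ≤ 1, let σ, γ > 0 be real, let n ≥ 0 be an integer, and let 0 ≤ β < 1. Suppose F is analytic on E with F(0) = 1 and F satisfies condition T_n^α(β). Define Φ : E → ℂ by Φ(z) = (Γ(σ+γ+1)/(Γ(σ+1)Γ(γ+1))) · σ ∫₀¹ (1 − s)^{σ−1} s^{γ+α−1} F(s z) ds (the integral over the real variable s ∈ (0,1)). Then Φ is analytic on E and, with c_k denoting its Taylor coefficients at 0, the series Σ_{k≥0} ((α+k)/α)^n c_k z^k converges on E and its sum has real part greater than β throughout E (i.e., Φ satisfies condition T_n^α(β)). -/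

import Mathlib

open Complex Metric

/-- The `k`-th Taylor coefficient of `F` at `0`. -/
noncomputable def taylorCoeff (F : ℂ → ℂ) (k : ℕ) : ℂ :=
  iteratedDeriv k F 0 / (k.factorial : ℂ)

/-- `F` satisfies Opoola's condition `T_n^α(β)`: the series
`Σ ((α+k)/α)^n c_k z^k` (with `c_k` the Taylor coefficients of `F` at `0`)
converges on the unit disk and its sum has real part greater than `β` there. -/
def TcondF (α : ℝ) (n : ℕ) (β : ℝ) (F : ℂ → ℂ) : Prop :=
  ∀ z ∈ ball (0 : ℂ) 1,
    Summable (fun k : ℕ => ((((α + k) / α) ^ n : ℝ) : ℂ) * taylorCoeff F k * z ^ k) ∧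
      β < (∑' k : ℕ, ((((α + k) / α) ^ n : ℝ) : ℂ) * taylorCoeff F k * z ^ k).re

/-!
Writing `F(z) = Σ aₖ zᵏ` and `w(s) = C(σ+γ,γ) σ (1-s)^(σ-1) s^(γ+α-1)`, termwise integration gives
`Φ(z) = Σ mₖ aₖ zᵏ` with moments `mₖ = ∫₀¹ w(s) sᵏ ds`. The same interchange turns
`Σ ((α+k)/α)ⁿ mₖ aₖ zᵏ` into `∫₀¹ w(s) G(sz) ds`, where `G(z) = Σ ((α+k)/α)ⁿ aₖ zᵏ` has real part
`> β`. Hence its real part exceeds `β ∫₀¹ w`, and `∫₀¹ w = Γ(σ+γ+1) Γ(γ+α) / (Γ(γ+1) Γ(σ+γ+α)) ≥ 1`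
by log-convexity of `Γ`.
-/

open MeasureTheory Set FormalMultilinearSeries
open scoped NNReal ENNReal Interval

theorem hasFPowerSeriesOnBall_ofScalars_of_hasSum {a : ℕ → ℂ} {f : ℂ → ℂ} {r : ℝ≥0}
    (hr : 0 < r) (h : ∀ z ∈ ball (0 : ℂ) r, HasSum (fun k => a k * z ^ k) (f z)) :
    HasFPowerSeriesOnBall f (ofScalars ℂ a) 0 r where
  r_le := by
    refine ENNReal.le_of_forall_nnreal_lt fun t ht => ?_
    have hsum := h t (by simpa using ht)
    refine (ofScalars ℂ a).le_radius_of_tendsto (l := 0) ?_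
    simpa [ofScalars_norm] using hsum.summable.tendsto_atTop_zero.norm
  r_pos := by simpa using hr
  hasSum {y} hy := by
    simpa [ofScalars_apply_eq, mul_comm] using h y (by simpa using hy)

theorem summable_norm_mul_pow_of_summable {a : ℕ → ℂ} {r : ℝ≥0}
    (h : ∀ y ∈ ball (0 : ℂ) r, Summable fun k => a k * y ^ k) {z : ℂ} (hz : z ∈ ball (0 : ℂ) r) :
    Summable fun k => ‖a k‖ * ‖z‖ ^ k := by
  have hr : 0 < r := by simpa using pos_of_mem_ball hz
  have hps := hasFPowerSeriesOnBall_ofScalars_of_hasSum hr fun y hy => (h y hy).hasSum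
  have hz' : (‖z‖₊ : ℝ≥0∞) < (ofScalars ℂ a).radius :=
    lt_of_lt_of_le (by simpa [← NNReal.coe_lt_coe] using hz) hps.r_le
  simpa [ofScalars_norm] using (ofScalars ℂ a).summable_norm_mul_pow hz'

theorem taylorCoeff_eq_coeff {f : ℂ → ℂ} {p : FormalMultilinearSeries ℂ ℂ ℂ} {r : ℝ≥0∞}
    (h : HasFPowerSeriesOnBall f p 0 r) (k : ℕ) : taylorCoeff f k = p.coeff k := by
  rw [taylorCoeff, iteratedDeriv_eq_iteratedFDeriv, ← h.factorial_smul 1 k, nsmul_eq_mul,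
    mul_div_cancel_left₀ _ (by exact_mod_cast k.factorial_ne_zero)]
  rfl

theorem hasSum_taylorCoeff_mul_pow {F : ℂ → ℂ} {r : ℝ} (hF : DifferentiableOn ℂ F (ball 0 r))
    {z : ℂ} (hz : z ∈ ball 0 r) : HasSum (fun k => taylorCoeff F k * z ^ k) (F z) := by
  have h := Complex.hasSum_taylorSeries_on_ball hF hz
  simp only [sub_zero, smul_eq_mul] at h
  have hk : ∀ k, taylorCoeff F k * z ^ k = (k.factorial : ℂ)⁻¹ * (z ^ k * iteratedDeriv k F 0) :=
    fun k => by unfold taylorCoeff; ring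
  simpa only [hk] using h

theorem Metric.eball_one {X : Type*} [PseudoMetricSpace X] (x : X) : eball x 1 = ball x 1 := by
  rw [← ENNReal.coe_one, eball_coe, NNReal.coe_one]

theorem ofReal_mul_mem_ball_zero {r s : ℝ} {z : ℂ} (hs : s ∈ Icc (0 : ℝ) 1)
    (hz : z ∈ ball (0 : ℂ) r) : (s : ℂ) * z ∈ ball (0 : ℂ) r := by
  rw [← real_smul]
  exact (convex_ball 0 r).smul_mem_of_zero_mem (mem_ball_self (pos_of_mem_ball hz)) hz hs

theorem IntervalIntegrable.ofReal {f : ℝ → ℝ} {a b : ℝ} {μ : Measure ℝ}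
    (hf : IntervalIntegrable f μ a b) : IntervalIntegrable (fun x => (f x : ℂ)) μ a b :=
  ⟨hf.1.ofReal, hf.2.ofReal⟩

noncomputable def intervalMoment (W : ℝ → ℂ) (k : ℕ) : ℂ :=
  ∫ s in (0 : ℝ)..1, W s * (s : ℂ) ^ k

theorem hasSum_intervalMoment_mul {W : ℝ → ℂ} (hW : IntervalIntegrable W volume 0 1)
    {d : ℕ → ℂ} {z : ℂ} (hd : Summable fun k => ‖d k‖ * ‖z‖ ^ k) :
    HasSum (fun k => intervalMoment W k * (d k * z ^ k))
      (∫ s in (0 : ℝ)..1, W s * ∑' k, d k * ((s : ℂ) * z) ^ k) := by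
  have hterm_le : ∀ s ∈ Ι (0 : ℝ) 1, ∀ k, ‖d k * ((s : ℂ) * z) ^ k‖ ≤ ‖d k‖ * ‖z‖ ^ k := by
    intro s hs k
    rw [uIoc_of_le zero_le_one] at hs
    rw [norm_mul, norm_pow, norm_mul, norm_real, Real.norm_of_nonneg hs.1.le]
    exact mul_le_mul_of_nonneg_left
      (pow_le_pow_left₀ (mul_nonneg hs.1.le (norm_nonneg z))
        (mul_le_of_le_one_left (norm_nonneg z) hs.2) k)
      (norm_nonneg _)
  have hmoment : ∀ k, intervalMoment W k * (d k * z ^ k)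
      = ∫ s in (0 : ℝ)..1, W s * (d k * ((s : ℂ) * z) ^ k) := by
    intro k
    rw [intervalMoment, ← intervalIntegral.integral_mul_const]
    congr 1 with s
    ring
  simp only [hmoment]
  refine intervalIntegral.hasSum_integral_of_dominated_convergence
    (fun k s => ‖W s‖ * (‖d k‖ * ‖z‖ ^ k)) (fun k => ?_) (fun k => ?_) ?_ ?_ ?_
  · exact hW.def'.aestronglyMeasurable.mul (by fun_prop : Continuous _).aestronglyMeasurable
  · refine ae_of_all _ fun s hs => ?_
    rw [norm_mul]
    exact mul_le_mul_of_nonneg_left (hterm_le s hs k) (norm_nonneg _)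
  · exact ae_of_all _ fun s _ => hd.mul_left _
  · simp_rw [tsum_mul_left]
    exact hW.norm.mul_const _
  · exact ae_of_all _ fun s hs => ((hd.of_norm_bounded (hterm_le s hs)).hasSum).mul_left (W s)

theorem mul_intervalIntegral_lt_re_intervalIntegral {w : ℝ → ℝ} {g : ℝ → ℂ} {β : ℝ}
    (hw : IntervalIntegrable w volume 0 1) (hw_pos : ∀ s ∈ Ioo (0 : ℝ) 1, 0 < w s)
    (hg : ContinuousOn g (Icc 0 1)) (hgβ : ∀ s ∈ Ioo (0 : ℝ) 1, β < (g s).re) :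
    β * ∫ s in (0 : ℝ)..1, w s < (∫ s in (0 : ℝ)..1, (w s : ℂ) * g s).re := by
  rw [← uIcc_of_le zero_le_one] at hg
  have hwg : IntervalIntegrable (fun s => (w s : ℂ) * g s) volume 0 1 :=
    hw.ofReal.mul_continuousOn hg
  have hwre : IntervalIntegrable (fun s => w s * (g s).re) volume 0 1 :=
    hw.mul_continuousOn (continuous_re.comp_continuousOn hg)
  have hpos : 0 < ∫ s in (0 : ℝ)..1, w s * ((g s).re - β) :=
    intervalIntegral.intervalIntegral_pos_of_pos_on
      (by simpa only [mul_sub] using hwre.sub (hw.mul_const β))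
      (fun s hs => mul_pos (hw_pos s hs) (sub_pos.2 (hgβ s hs))) zero_lt_one
  have hre : (∫ s in (0 : ℝ)..1, (w s : ℂ) * g s).re = ∫ s in (0 : ℝ)..1, w s * (g s).re := by
    simpa only [RCLike.re_to_complex, re_ofReal_mul]
      using (intervalIntegral.intervalIntegral_re hwg).symm
  simp only [mul_sub] at hpos
  rw [intervalIntegral.integral_sub hwre (hw.mul_const β), intervalIntegral.integral_mul_const]
    at hpos
  rw [hre]
  linarith

theorem ofReal_one_sub_rpow_mul_rpow {p q s : ℝ} (hs : s ∈ Icc (0 : ℝ) 1) :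
    (((1 - s) ^ (q - 1) * s ^ (p - 1) : ℝ) : ℂ)
      = (s : ℂ) ^ ((p : ℂ) - 1) * (1 - (s : ℂ)) ^ ((q : ℂ) - 1) := by
  rw [mul_comm, ofReal_mul, ofReal_cpow hs.1, ofReal_cpow (sub_nonneg.2 hs.2)]
  push_cast
  rfl

theorem intervalIntegrable_one_sub_rpow_mul_rpow {p q : ℝ} (hp : 0 < p) (hq : 0 < q) :
    IntervalIntegrable (fun s => (1 - s) ^ (q - 1) * s ^ (p - 1)) volume 0 1 := by
  have hC := betaIntegral_convergent (u := p) (v := q) (by simpa) (by simpa)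
  refine hC.norm.congr fun s hs => ?_
  rw [uIoc_of_le zero_le_one] at hs
  rw [← ofReal_one_sub_rpow_mul_rpow (Ioc_subset_Icc_self hs), norm_real, Real.norm_of_nonneg]
  exact mul_nonneg (Real.rpow_nonneg (sub_nonneg.2 hs.2) _) (Real.rpow_nonneg hs.1.le _)

theorem intervalIntegral_one_sub_rpow_mul_rpow {p q : ℝ} (hp : 0 < p) (hq : 0 < q) :
    ∫ s in (0 : ℝ)..1, (1 - s) ^ (q - 1) * s ^ (p - 1)
      = Real.Gamma p * Real.Gamma q / Real.Gamma (p + q) := by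
  have hB := Gamma_mul_Gamma_eq_betaIntegral (s := p) (t := q) (by simpa) (by simpa)
  rw [betaIntegral, ← intervalIntegral.integral_congr (fun s hs => ofReal_one_sub_rpow_mul_rpow
      (by rwa [uIcc_of_le zero_le_one] at hs)), intervalIntegral.integral_ofReal,
    ← ofReal_add, Gamma_ofReal, Gamma_ofReal, Gamma_ofReal] at hB
  have hΓ : Real.Gamma (p + q) ≠ 0 := (Real.Gamma_pos_of_pos (add_pos hp hq)).ne'
  rw [eq_div_iff hΓ, mul_comm]
  exact_mod_cast hB.symm

theorem ConvexOn.map_add_sub_map_le {s : Set ℝ} {f : ℝ → ℝ} (hf : ConvexOn ℝ s f) {x y h : ℝ}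
    (hx : x ∈ s) (hyh : y + h ∈ s) (hxy : x ≤ y) (hh : 0 ≤ h) :
    f (x + h) - f x ≤ f (y + h) - f y := by
  obtain heq | hlt := (show x ≤ y + h by linarith).eq_or_lt
  · obtain rfl : x = y := by linarith
    obtain rfl : h = 0 := by linarith
    simp
  have hd : 0 < y + h - x := sub_pos.2 hlt
  have hsum : (y - x) / (y + h - x) + h / (y + h - x) = 1 := by field_simp; ring
  -- `x + h` and `y` are the two convex combinations of `x` and `y + h` with swapped weights
  have h₁ := hf.2 hx hyh (div_nonneg (sub_nonneg.2 hxy) hd.le) (div_nonneg hh hd.le) hsum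
  have h₂ := hf.2 hx hyh (div_nonneg hh hd.le) (div_nonneg (sub_nonneg.2 hxy) hd.le)
    (by rw [add_comm, hsum])
  have e₁ : (y - x) / (y + h - x) * x + h / (y + h - x) * (y + h) = x + h := by
    field_simp; ring
  have e₂ : h / (y + h - x) * x + (y - x) / (y + h - x) * (y + h) = y := by
    field_simp; ring
  simp only [smul_eq_mul, e₁, e₂] at h₁ h₂
  linear_combination h₁ + h₂ + (f x + f (y + h)) * hsum

theorem Real.Gamma_add_mul_Gamma_le {x y h : ℝ} (hx : 0 < x) (hxy : x ≤ y) (hh : 0 ≤ h) :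
    Real.Gamma (x + h) * Real.Gamma y ≤ Real.Gamma (y + h) * Real.Gamma x := by
  have hlog := Real.convexOn_log_Gamma.map_add_sub_map_le hx (show 0 < y + h by linarith) hxy hh
  have := Real.Gamma_pos_of_pos hx
  have := Real.Gamma_pos_of_pos (show 0 < y by linarith)
  have := Real.Gamma_pos_of_pos (show 0 < x + h by linarith)
  have := Real.Gamma_pos_of_pos (show 0 < y + h by linarith)
  simp only [Function.comp_apply] at hlog
  rw [← Real.log_le_log_iff (by positivity) (by positivity), Real.log_mul (by positivity)
    (by positivity), Real.log_mul (by positivity) (by positivity)]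
  linarith

theorem one_le_mul_intervalIntegral_one_sub_rpow_mul_rpow {α σ γ : ℝ} (hα0 : 0 < α)
    (hα1 : α ≤ 1) (hσ : 0 < σ) (hγ : 0 < γ) :
    1 ≤ Real.Gamma (σ + γ + 1) / (Real.Gamma (σ + 1) * Real.Gamma (γ + 1)) * σ *
      ∫ s in (0 : ℝ)..1, (1 - s) ^ (σ - 1) * s ^ (γ + α - 1) := by
  have hΓ := Real.Gamma_add_mul_Gamma_le (x := γ + α) (y := σ + γ + α) (h := 1 - α)
    (by linarith) (by linarith) (by linarith)
  rw [show γ + α + (1 - α) = γ + 1 by ring, show σ + γ + α + (1 - α) = σ + γ + 1 by ring] at hΓ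
  have := Real.Gamma_pos_of_pos hσ
  have := Real.Gamma_pos_of_pos (show 0 < γ + 1 by linarith)
  have := Real.Gamma_pos_of_pos (show 0 < σ + γ + α by linarith)
  rw [intervalIntegral_one_sub_rpow_mul_rpow (by linarith) hσ, Real.Gamma_add_one hσ.ne',
    show γ + α + σ = σ + γ + α by ring]
  field_simp
  linarith

theorem hasFPowerSeriesOnBall_of_eq_intervalIntegral {W : ℝ → ℂ}
    (hW : IntervalIntegrable W volume 0 1) {F Φ : ℂ → ℂ} (hF : DifferentiableOn ℂ F (ball 0 1))
    (hΦ : ∀ z, Φ z = ∫ s in (0 : ℝ)..1, W s * F (s * z)) :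
    HasFPowerSeriesOnBall Φ (ofScalars ℂ fun k => intervalMoment W k * taylorCoeff F k) 0 1 := by
  refine hasFPowerSeriesOnBall_ofScalars_of_hasSum (r := 1) one_pos fun z hz => ?_
  rw [NNReal.coe_one] at hz
  have hFsum := fun y (hy : y ∈ ball (0 : ℂ) 1) => hasSum_taylorCoeff_mul_pow hF hy
  have hsum := hasSum_intervalMoment_mul hW (summable_norm_mul_pow_of_summable (r := 1)
    (fun y hy => (hFsum y (by simpa using hy)).summable) (by simpa using hz))
  rw [hΦ, intervalIntegral.integral_congr fun s hs => congrArg (W s * ·)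
    (hFsum _ (ofReal_mul_mem_ball_zero (by rwa [uIcc_of_le zero_le_one] at hs) hz)).tsum_eq.symm]
  simpa only [mul_assoc] using hsum

theorem tcondF_of_hasFPowerSeriesOnBall {w : ℝ → ℝ} (hw : IntervalIntegrable w volume 0 1)
    (hw_pos : ∀ s ∈ Ioo (0 : ℝ) 1, 0 < w s) (hw_one : 1 ≤ ∫ s in (0 : ℝ)..1, w s)
    {α β : ℝ} {n : ℕ} (hβ : 0 ≤ β) {F Φ : ℂ → ℂ} (hF : TcondF α n β F)
    (hΦ : HasFPowerSeriesOnBall Φ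
      (ofScalars ℂ fun k => intervalMoment (fun s => (w s : ℂ)) k * taylorCoeff F k) 0 1) :
    TcondF α n β Φ := by
  intro z hz
  set b : ℕ → ℂ := fun k => ((((α + k) / α) ^ n : ℝ) : ℂ) * taylorCoeff F k
  have hG := hasFPowerSeriesOnBall_ofScalars_of_hasSum (r := 1) one_pos fun y hy =>
    (hF y (by simpa using hy)).1.hasSum
  have hsum := hasSum_intervalMoment_mul hw.ofReal (summable_norm_mul_pow_of_summable (a := b)
    (r := 1) (fun y hy => (hF y (by simpa using hy)).1) (by simpa using hz))
  have hterm : ∀ k : ℕ, ((((α + k) / α) ^ n : ℝ) : ℂ) * taylorCoeff Φ k * z ^ k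
      = intervalMoment (fun s => (w s : ℂ)) k * (b k * z ^ k) := fun k => by
    rw [taylorCoeff_eq_coeff hΦ, coeff_ofScalars]
    ring
  simp only [← hterm] at hsum
  refine ⟨hsum.summable, ?_⟩
  rw [hsum.tsum_eq]
  have hmem : ∀ s ∈ Icc (0 : ℝ) 1, (s : ℂ) * z ∈ ball (0 : ℂ) 1 :=
    fun s hs => ofReal_mul_mem_ball_zero hs hz
  have hcont : ContinuousOn (fun s : ℝ => ∑' k, b k * ((s : ℂ) * z) ^ k) (Icc 0 1) :=
    (eball_one (0 : ℂ) ▸ hG.continuousOn).comp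
      (by fun_prop : Continuous fun s : ℝ => (s : ℂ) * z).continuousOn hmem
  calc β ≤ β * ∫ s in (0 : ℝ)..1, w s := le_mul_of_one_le_right hβ hw_one
    _ < _ := mul_intervalIntegral_lt_re_intervalIntegral hw hw_pos hcont
      fun s hs => (hF _ (hmem s (Ioo_subset_Icc_self hs))).2

theorem stmt_19_general (α : ℝ) (hα0 : 0 < α) (hα1 : α ≤ 1) (σ γ : ℝ) (hσ : 0 < σ)
    (hγ : 0 < γ) (n : ℕ) (β : ℝ) (hβ0 : 0 ≤ β)
    (F : ℂ → ℂ) (hFd : DifferentiableOn ℂ F (ball (0 : ℂ) 1))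
    (hFT : TcondF α n β F)
    (Φ : ℂ → ℂ)
    (hΦ : ∀ z : ℂ, Φ z = ((Real.Gamma (σ + γ + 1) /
        (Real.Gamma (σ + 1) * Real.Gamma (γ + 1)) * σ : ℝ) : ℂ) *
      ∫ s in (0 : ℝ)..1, (((1 - s) ^ (σ - 1) * s ^ (γ + α - 1) : ℝ) : ℂ) * F ((s : ℂ) * z)) :
    DifferentiableOn ℂ Φ (ball (0 : ℂ) 1) ∧ TcondF α n β Φ := by
  set C := Real.Gamma (σ + γ + 1) / (Real.Gamma (σ + 1) * Real.Gamma (γ + 1)) * σ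
  set w : ℝ → ℝ := fun s => C * ((1 - s) ^ (σ - 1) * s ^ (γ + α - 1))
  have hγα : 0 < γ + α := by linarith
  have hC : 0 < C := by positivity
  have hw : IntervalIntegrable w volume 0 1 :=
    (intervalIntegrable_one_sub_rpow_mul_rpow hγα hσ).const_mul C
  have hw_pos : ∀ s ∈ Ioo (0 : ℝ) 1, 0 < w s := fun s hs =>
    mul_pos hC (mul_pos (Real.rpow_pos_of_pos (sub_pos.2 hs.2) _) (Real.rpow_pos_of_pos hs.1 _))
  have hw_one : 1 ≤ ∫ s in (0 : ℝ)..1, w s := by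
    rw [intervalIntegral.integral_const_mul]
    exact one_le_mul_intervalIntegral_one_sub_rpow_mul_rpow hα0 hα1 hσ hγ
  have hΦw : ∀ z, Φ z = ∫ s in (0 : ℝ)..1, (w s : ℂ) * F (s * z) := fun z => by
    simp only [hΦ z, w, ← intervalIntegral.integral_const_mul, ofReal_mul, mul_assoc]
  have hps := hasFPowerSeriesOnBall_of_eq_intervalIntegral hw.ofReal hFd hΦw
  exact ⟨eball_one (0 : ℂ) ▸ hps.differentiableOn,
    tcondF_of_hasFPowerSeriesOnBall hw hw_pos hw_one hβ0 hFT hps⟩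

/-- Closure of `T_n^α(β)` under the generalized Jung–Kim–Srivastava transform
`Φ z = C(σ+γ,γ) σ ∫₀¹ (1-s)^(σ-1) s^(γ+α-1) F(s z) ds`. -/
theorem stmt_19 (α : ℝ) (hα0 : 0 < α) (hα1 : α ≤ 1) (σ γ : ℝ) (hσ : 0 < σ)
    (hγ : 0 < γ) (n : ℕ) (β : ℝ) (hβ0 : 0 ≤ β) (hβ1 : β < 1)
    (F : ℂ → ℂ) (hFd : DifferentiableOn ℂ F (ball (0 : ℂ) 1)) (hF0 : F 0 = 1)
    (hFT : TcondF α n β F)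
    (Φ : ℂ → ℂ)
    (hΦ : ∀ z : ℂ, Φ z = ((Real.Gamma (σ + γ + 1) /
        (Real.Gamma (σ + 1) * Real.Gamma (γ + 1)) * σ : ℝ) : ℂ) *
      ∫ s in (0 : ℝ)..1, (((1 - s) ^ (σ - 1) * s ^ (γ + α - 1) : ℝ) : ℂ) * F ((s : ℂ) * z)) :
    DifferentiableOn ℂ Φ (ball (0 : ℂ) 1) ∧ TcondF α n β Φ :=
  stmt_19_general α hα0 hα1 σ γ hσ hγ n β hβ0 F hFd hFT Φ hΦ
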